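/- arXiv:astro-ph/0008236 — 7 statements merged into one kernel-verified Lean document; each statement's English description precedes it below -/
import Mathlib

section
/- Let M > 0 and 0 < a ≤ M, let m be a positive integer, and set Δ(r) := r² − 2Mr + a², r₊ := M + √(M² − a²), w(r,θ) := (r²+a²)²/Δ(r) − a² sin²θ. Then for every r > r₊ and every θ ∈ (0,π) one has 0 < (4mMar/Δ(r)) · w(r,θ)⁻¹ ≤ ma/(M r₊). -/
/-- Kerr horizon function `Δ(r) = r² − 2Mr + a²`. -/
noncomputable def kerrDelta (M a r : ℝ) : ℝ := r ^ 2 - 2 * M * r + a ^ 2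

/-- Outer horizon radius `r₊ = M + √(M² − a²)`. -/
noncomputable def rPlus (M a : ℝ) : ℝ := M + Real.sqrt (M ^ 2 - a ^ 2)

/-- The weight `w(r,θ) = (r²+a²)²/Δ(r) − a² sin²θ`. -/
noncomputable def kerrW (M a r θ : ℝ) : ℝ :=
  (r ^ 2 + a ^ 2) ^ 2 / kerrDelta M a r - a ^ 2 * Real.sin θ ^ 2

theorem stmt_0 (M a : ℝ) (m : ℤ) (hM : 0 < M) (ha : 0 < a) (haM : a ≤ M) (hm : 0 < m)
    (r θ : ℝ) (hr : rPlus M a < r) (hθ : θ ∈ Set.Ioo 0 Real.pi) :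
    0 < 4 * (m : ℝ) * M * a * r / kerrDelta M a r * (kerrW M a r θ)⁻¹ ∧
      4 * (m : ℝ) * M * a * r / kerrDelta M a r * (kerrW M a r θ)⁻¹ ≤
        (m : ℝ) * a / (M * rPlus M a) := by
  set s := Real.sqrt (M ^ 2 - a ^ 2) with hs
  clear_value s
  have hs0 : 0 ≤ s := by rw [hs]; exact Real.sqrt_nonneg _
  have hs2 : s ^ 2 = M ^ 2 - a ^ 2 := by rw [hs]; exact Real.sq_sqrt (by nlinarith)
  have hrp : rPlus M a = M + s := by rw [hs, rPlus]
  have hrps : (0:ℝ) < M + s := by linarith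
  have hr' : M + s < r := by rw [hrp] at hr; exact hr
  have hr0 : 0 < r := lt_trans hrps hr'
  have hm' : (1:ℝ) ≤ (m:ℝ) := by exact_mod_cast hm
  set D := kerrDelta M a r with hDdef
  clear_value D
  have hD : 0 < D := by
    have : D = (r - M) ^ 2 - s ^ 2 := by rw [hDdef, kerrDelta]; nlinarith [hs2]
    nlinarith [hs2]
  have hDne : D ≠ 0 := ne_of_gt hD
  set W := kerrW M a r θ with hWdef
  clear_value W
  have hDW : D * W = (r ^ 2 + a ^ 2) ^ 2 - D * (a ^ 2 * Real.sin θ ^ 2) := by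
    rw [hWdef, kerrW, ← hDdef]
    field_simp
  have hsin : Real.sin θ ^ 2 ≤ 1 := Real.sin_sq_le_one θ
  have hsin0 : 0 ≤ Real.sin θ ^ 2 := sq_nonneg _
  have hquad : 0 ≤ r ^ 2 + (M + s) * r + (M + s) ^ 2 + a ^ 2 := by positivity
  have hprod : 0 ≤ r * (r - (M + s)) * (r ^ 2 + (M + s) * r + (M + s) ^ 2 + a ^ 2) :=
    mul_nonneg (mul_nonneg hr0.le (by linarith)) hquad
  have hid : (r ^ 2 + a ^ 2) ^ 2 - (r ^ 2 - 2 * M * r + a ^ 2) * a ^ 2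
      - 4 * M ^ 2 * r * (M + s)
      = r * (r - (M + s)) * (r ^ 2 + (M + s) * r + (M + s) ^ 2 + a ^ 2) := by
    linear_combination (2 * M * r + r * (M + s)) * hs2
  have hD' : (0:ℝ) < r ^ 2 - 2 * M * r + a ^ 2 := by
    rw [hDdef, kerrDelta] at hD; exact hD
  have h1 : 0 ≤ (r ^ 2 - 2 * M * r + a ^ 2) * (a ^ 2 * (1 - Real.sin θ ^ 2)) :=
    mul_nonneg hD'.le (mul_nonneg (sq_nonneg a) (by linarith))
  have hkey : 4 * M ^ 2 * r * (M + s) ≤ D * W := by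
    rw [hDW, hDdef, kerrDelta]
    nlinarith [hid, hprod, h1]
  have hW : 0 < W := by
    have h1 : 0 < D * W := lt_of_lt_of_le (by positivity) hkey
    nlinarith [h1, hD]
  have hE : 4 * (m : ℝ) * M * a * r / D * W⁻¹ = 4 * (m : ℝ) * M * a * r / (D * W) := by
    rw [← div_eq_mul_inv, div_div]
  have hm0 : (0:ℝ) < (m:ℝ) := by linarith
  have hnum : 0 < 4 * (m : ℝ) * M * a * r := by
    have h := mul_pos (mul_pos (mul_pos hm0 hM) ha) hr0
    linarith
  constructor
  · rw [hE]
    exact div_pos hnum (mul_pos hD hW)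
  · rw [hE, hrp, div_le_div_iff₀ (mul_pos hD hW) (mul_pos hM hrps)]
    have h2 := mul_le_mul_of_nonneg_left hkey (mul_pos hm0 ha).le
    linarith
end

section
/- Let M > 0 and 0 ≤ a ≤ M, and set Δ(r) := r² − 2Mr + a², r₊ := M + √(M² − a²), w(r,θ) := (r²+a²)²/Δ(r) − a² sin²θ. Then for every r > r₊ and every θ ∈ (0,π) one has r⁴/Δ(r) ≤ w(r,θ) ≤ (4M²/r₊²) · r⁴/Δ(r). -/
theorem stmt_1 (M a : ℝ) (hM : 0 < M) (ha : 0 ≤ a) (haM : a ≤ M)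
    (r θ : ℝ) (hr : rPlus M a < r) (hθ : θ ∈ Set.Ioo 0 Real.pi) :
    r ^ 4 / kerrDelta M a r ≤ kerrW M a r θ ∧
      kerrW M a r θ ≤ 4 * M ^ 2 / rPlus M a ^ 2 * (r ^ 4 / kerrDelta M a r) := by
  set s := Real.sqrt (M ^ 2 - a ^ 2) with hs
  have hs0 : 0 ≤ s := Real.sqrt_nonneg _
  have hs2 : s ^ 2 = M ^ 2 - a ^ 2 := Real.sq_sqrt (by nlinarith)
  have hsM : s ≤ M := by nlinarith
  have hrp : rPlus M a = M + s := rfl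
  have hrp0 : 0 < rPlus M a := by rw [hrp]; linarith
  have hr' : M + s < r := by rw [← hrp]; exact hr
  have hr0 : 0 < r := lt_trans hrp0 hr
  have hΔ : 0 < kerrDelta M a r := by
    have h1 : 0 < r - M - s := by linarith
    have h2 : 0 < r - M + s := by linarith
    have := mul_pos h1 h2
    unfold kerrDelta
    nlinarith
  have hsin : Real.sin θ ^ 2 ≤ 1 := Real.sin_sq_le_one θ
  have hΔle : kerrDelta M a r ≤ 2 * r ^ 2 + a ^ 2 := by
    unfold kerrDelta; nlinarith
  constructor
  · have key : kerrW M a r θ - r ^ 4 / kerrDelta M a r =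
        (a ^ 2 * (2 * r ^ 2 + a ^ 2) - a ^ 2 * Real.sin θ ^ 2 * kerrDelta M a r) /
          kerrDelta M a r := by
      unfold kerrW
      field_simp
      ring
    have hnum : 0 ≤ a ^ 2 * (2 * r ^ 2 + a ^ 2) - a ^ 2 * Real.sin θ ^ 2 * kerrDelta M a r := by
      have h1 := mul_le_of_le_one_right (mul_nonneg (sq_nonneg a) hΔ.le) hsin
      nlinarith [sq_nonneg a]
    linarith [key ▸ div_nonneg hnum hΔ.le]
  · have hrsq : (M + s) ^ 2 ≤ r ^ 2 := by nlinarith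
    have h1 : rPlus M a * (r ^ 2 + a ^ 2) ≤ 2 * M * r ^ 2 := by
      rw [hrp]
      nlinarith [mul_le_mul_of_nonneg_left hrsq (by linarith : (0:ℝ) ≤ M - s)]
    have key : rPlus M a ^ 2 * (r ^ 2 + a ^ 2) ^ 2 ≤ 4 * M ^ 2 * r ^ 4 := by
      nlinarith [mul_self_nonneg (rPlus M a * (r ^ 2 + a ^ 2)),
        mul_le_mul h1 h1 (by positivity) (by positivity)]
    have hup : (r ^ 2 + a ^ 2) ^ 2 / kerrDelta M a r ≤
        4 * M ^ 2 / rPlus M a ^ 2 * (r ^ 4 / kerrDelta M a r) := by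
      rw [div_mul_div_comm, div_le_div_iff₀ hΔ (by positivity)]
      have h2 := mul_le_mul_of_nonneg_right key hΔ.le
      ring_nf at h2 ⊢
      linarith
    have : kerrW M a r θ ≤ (r ^ 2 + a ^ 2) ^ 2 / kerrDelta M a r := by
      unfold kerrW
      have : 0 ≤ a ^ 2 * Real.sin θ ^ 2 := by positivity
      linarith
    linarith
end

section
/- Let M > 0 and 0 ≤ a ≤ M, and set Δ(r) := r² − 2Mr + a², r₊ := M + √(M² − a²), w(r,θ) := (r²+a²)²/Δ(r) − a² sin²θ, and h(r,θ) := (r⁴/Δ(r)) · w(r,θ)⁻¹. Then for every r > r₊ and every θ ∈ (0,π) one has r₊²/(4M²) ≤ h(r,θ) ≤ 1. -/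
/-- `h(r,θ) = (r⁴/Δ(r)) · w(r,θ)⁻¹`. -/
noncomputable def kerrH (M a r θ : ℝ) : ℝ := r ^ 4 / kerrDelta M a r * (kerrW M a r θ)⁻¹

theorem stmt_2 (M a : ℝ) (hM : 0 < M) (ha : 0 ≤ a) (haM : a ≤ M)
    (r θ : ℝ) (hr : rPlus M a < r) (hθ : θ ∈ Set.Ioo 0 Real.pi) :
    rPlus M a ^ 2 / (4 * M ^ 2) ≤ kerrH M a r θ ∧ kerrH M a r θ ≤ 1 := by
  set s := Real.sqrt (M ^ 2 - a ^ 2) with hs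
  have hs0 : 0 ≤ s := Real.sqrt_nonneg _
  have hs2 : s ^ 2 = M ^ 2 - a ^ 2 := Real.sq_sqrt (by nlinarith)
  have hsM : s ≤ M := by nlinarith
  have hrp : rPlus M a = M + s := rfl
  rw [hrp] at hr ⊢
  have hrpos : 0 < r := by nlinarith
  have hΔ : 0 < kerrDelta M a r := by
    have h1 : 0 < r - (M + s) := sub_pos.2 hr
    unfold kerrDelta; nlinarith [mul_pos h1 (show (0:ℝ) < r - M + s by nlinarith)]
  have hsin : Real.sin θ ^ 2 ≤ 1 := Real.sin_sq_le_one θ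
  -- E := W * Δ
  set E : ℝ := (r ^ 2 + a ^ 2) ^ 2 - a ^ 2 * Real.sin θ ^ 2 * kerrDelta M a r with hE
  have hEr4 : r ^ 4 ≤ E := by
    have h1 : 0 ≤ a ^ 2 * (1 - Real.sin θ ^ 2) * kerrDelta M a r :=
      mul_nonneg (mul_nonneg (sq_nonneg a) (by linarith)) hΔ.le
    unfold kerrDelta at *
    nlinarith [mul_nonneg (mul_nonneg (sq_nonneg a) hM.le) hrpos.le, sq_nonneg (a*r)]
  have hEpos : 0 < E := lt_of_lt_of_le (by positivity) hEr4
  have hWE : kerrW M a r θ = E / kerrDelta M a r := by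
    rw [kerrW, hE]; field_simp
  have hH : kerrH M a r θ = r ^ 4 / E := by
    rw [kerrH, hWE]
    field_simp
  constructor
  · rw [hH, div_le_div_iff₀ (by positivity) hEpos]
    have h2 : (M + s) ^ 2 ≤ r ^ 2 := by nlinarith
    have key2 : (M + s) * (r ^ 2 + a ^ 2) ≤ 2 * M * r ^ 2 := by
      nlinarith [mul_nonneg (sub_nonneg.2 hsM) (sub_nonneg.2 h2)]
    have hEub : E ≤ (r ^ 2 + a ^ 2) ^ 2 := by
      rw [hE]
      have h3 : 0 ≤ a ^ 2 * Real.sin θ ^ 2 * kerrDelta M a r := by positivity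
      linarith
    have hsq := mul_self_le_mul_self (by positivity : (0:ℝ) ≤ (M + s) * (r ^ 2 + a ^ 2)) key2
    nlinarith [mul_le_mul_of_nonneg_left hEub (sq_nonneg (M + s)), hsq]
  · rw [hH, div_le_one hEpos]; exact hEr4
end

section
/- Let M > 0, 0 ≤ a ≤ M, m ∈ ℤ, and set Δ(r) := r² − 2Mr + a², r₊ := M + √(M² − a²), Ω := (r₊,∞) × (0,π), w(r,θ) := (r²+a²)²/Δ(r) − a² sin²θ, and α := m²a²/(4M²r₊²). Then for every f ∈ C²(Ω,ℂ) with compact support contained in Ω one has ∫_Ω [ Δ(r) |∂f/∂r|² + |∂f/∂θ|² + (m²/sin²θ − m²a²/Δ(r)) |f|² ] · sin θ dr dθ ≥ −α · ∫_Ω w(r,θ) |f|² sin θ dr dθ. In other words, the reduced wave operator A₀ is semibounded from below with lower bound −α on L²(Ω, w sinθ dr dθ). -/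
open MeasureTheory

/-- Partial derivative in the first (radial) variable. -/
noncomputable def pdr (f : ℝ × ℝ → ℂ) (p : ℝ × ℝ) : ℂ := deriv (fun x => f (x, p.2)) p.1

/-- Partial derivative in the second (angular) variable. -/
noncomputable def pdθ (f : ℝ × ℝ → ℂ) (p : ℝ × ℝ) : ℂ := deriv (fun y => f (p.1, y)) p.2

/-! The bound holds pointwise. The kinetic terms are nonnegative, and with α = m²a²/(4M²r₊²) the
potential satisfies m²/sin²θ − m²a²/Δ + α w ≥ 0 on Ω: since r₊² + a² = 2Mr₊ we have
4M²r₊² = (r₊² + a²)², and the left side splits as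
m²(1/sin²θ − a⁴ sin²θ/(r₊² + a²)²) + (m²a²/Δ)((r² + a²)²/(r₊² + a²)² − 1),
a sum of two nonnegative terms for r > r₊. Compact support inside Ω makes both integrands
integrable, so the pointwise bound integrates. -/

open Topology

lemma IsCompact.integrableOn_of_continuousOn {X E : Type*} [TopologicalSpace X] [T2Space X]
    [MeasurableSpace X] [OpensMeasurableSpace X] [NormedAddCommGroup E] {μ : Measure X}
    [IsFiniteMeasureOnCompacts μ] {K U : Set X} {g : X → E} (hK : IsCompact K)
    (hU : MeasurableSet U) (hKU : K ⊆ U) (hg : ContinuousOn g U) (hg0 : ∀ x ∈ U \ K, g x = 0) :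
    IntegrableOn g U μ :=
  ((hg.mono hKU).integrableOn_compact hK).of_forall_sdiff_eq_zero hU hg0

lemma pdr_eq_fderiv {f : ℝ × ℝ → ℂ} (hf : Differentiable ℝ f) (p : ℝ × ℝ) :
    pdr f p = fderiv ℝ f p (1, 0) :=
  ((hf p).hasFDerivAt.comp_hasDerivAt p.1
    ((hasDerivAt_id p.1).prodMk (hasDerivAt_const p.1 p.2))).deriv

lemma pdθ_eq_fderiv {f : ℝ × ℝ → ℂ} (hf : Differentiable ℝ f) (p : ℝ × ℝ) :
    pdθ f p = fderiv ℝ f p (0, 1) :=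
  ((hf p).hasFDerivAt.comp_hasDerivAt p.2
    ((hasDerivAt_const p.2 p.1).prodMk (hasDerivAt_id p.2))).deriv

lemma ContDiff.continuous_pdr {f : ℝ × ℝ → ℂ} (hf : ContDiff ℝ 1 f) : Continuous (pdr f) := by
  rw [funext (pdr_eq_fderiv (hf.differentiable one_ne_zero))]
  exact (hf.continuous_fderiv one_ne_zero).clm_apply continuous_const

lemma ContDiff.continuous_pdθ {f : ℝ × ℝ → ℂ} (hf : ContDiff ℝ 1 f) : Continuous (pdθ f) := by
  rw [funext (pdθ_eq_fderiv (hf.differentiable one_ne_zero))]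
  exact (hf.continuous_fderiv one_ne_zero).clm_apply continuous_const

lemma pdr_eq_zero_of_notMem_tsupport {f : ℝ × ℝ → ℂ} {p : ℝ × ℝ} (hp : p ∉ tsupport f) :
    pdr f p = 0 := by
  rw [notMem_tsupport_iff_eventuallyEq] at hp
  have h : (fun x => f (x, p.2)) =ᶠ[𝓝 p.1] fun _ => 0 :=
    (Continuous.prodMk_left p.2).continuousAt.eventually hp
  exact h.deriv_eq.trans (deriv_const _ _)

lemma pdθ_eq_zero_of_notMem_tsupport {f : ℝ × ℝ → ℂ} {p : ℝ × ℝ} (hp : p ∉ tsupport f) :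
    pdθ f p = 0 := by
  rw [notMem_tsupport_iff_eventuallyEq] at hp
  have h : (fun y => f (p.1, y)) =ᶠ[𝓝 p.2] fun _ => 0 :=
    (Continuous.prodMk_right p.1).continuousAt.eventually hp
  exact h.deriv_eq.trans (deriv_const _ _)

lemma inv_sq_sub_add_mul_nonneg {μ a s D K R : ℝ} (hμ : 0 ≤ μ) (hD : 0 < D) (hs : 0 < s)
    (hs1 : s ≤ 1) (hK : 0 < K) (haK : a ^ 4 ≤ K) (hKR : K ≤ R) :
    0 ≤ μ / s ^ 2 - μ * a ^ 2 / D + μ * a ^ 2 / K * (R / D - a ^ 2 * s ^ 2) := by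
  have hang : a ^ 4 * s ^ 2 / K ≤ 1 / s ^ 2 := calc
    a ^ 4 * s ^ 2 / K ≤ 1 := by
      rw [div_le_one hK]
      nlinarith [pow_le_one₀ hs.le hs1 (n := 2), pow_nonneg (sq_nonneg a) 2]
    _ ≤ 1 / s ^ 2 := one_le_one_div (by positivity) (pow_le_one₀ hs.le hs1)
  have hrad : 1 ≤ R / K := (one_le_div hK).2 hKR
  have key : μ / s ^ 2 - μ * a ^ 2 / D + μ * a ^ 2 / K * (R / D - a ^ 2 * s ^ 2)
      = μ * (1 / s ^ 2 - a ^ 4 * s ^ 2 / K) + μ * a ^ 2 / D * (R / K - 1) := by ring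
  rw [key]
  have := sub_nonneg.2 hang
  have := sub_nonneg.2 hrad
  positivity

lemma kerrDelta_pos {M a r : ℝ} (hr : rPlus M a < r) : 0 < kerrDelta M a r := by
  have h : M ^ 2 - a ^ 2 < (r - M) ^ 2 := Real.lt_sq_of_sqrt_lt (by rw [rPlus] at hr; linarith)
  rw [kerrDelta]
  linarith

lemma le_rPlus (M a : ℝ) : M ≤ rPlus M a :=
  le_add_of_nonneg_right (Real.sqrt_nonneg _)

lemma rPlus_sq_add_sq {M a : ℝ} (h : a ^ 2 ≤ M ^ 2) :
    rPlus M a ^ 2 + a ^ 2 = 2 * M * rPlus M a := by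
  have hs : Real.sqrt (M ^ 2 - a ^ 2) ^ 2 = M ^ 2 - a ^ 2 := Real.sq_sqrt (by linarith)
  rw [rPlus]
  linear_combination hs

@[fun_prop]
lemma continuous_kerrDelta (M a : ℝ) : Continuous (fun r => kerrDelta M a r) := by
  unfold kerrDelta; fun_prop

lemma kerr_potential_add_mul_kerrW_nonneg {M a r θ : ℝ} (m : ℝ) (hM : 0 < M) (ha : 0 ≤ a)
    (haM : a ≤ M) (hr : rPlus M a < r) (hθ : 0 < Real.sin θ) :
    0 ≤ m ^ 2 / Real.sin θ ^ 2 - m ^ 2 * a ^ 2 / kerrDelta M a r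
      + m ^ 2 * a ^ 2 / (4 * M ^ 2 * rPlus M a ^ 2) * kerrW M a r θ := by
  have hrp : 0 < rPlus M a := hM.trans_le (le_rPlus M a)
  have hK : 4 * M ^ 2 * rPlus M a ^ 2 = (rPlus M a ^ 2 + a ^ 2) ^ 2 := by
    rw [rPlus_sq_add_sq (pow_le_pow_left₀ ha haM 2)]; ring
  apply inv_sq_sub_add_mul_nonneg (sq_nonneg m) (kerrDelta_pos hr) hθ (Real.sin_le_one θ)
    (by positivity) <;> rw [hK]
  · nlinarith [pow_le_pow_left₀ (sq_nonneg a) (le_add_of_nonneg_left (sq_nonneg (rPlus M a))) 2]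
  · gcongr

lemma neg_mul_kerrW_le_energy_density {M a r θ : ℝ} (m : ℝ) (hM : 0 < M) (ha : 0 ≤ a)
    (haM : a ≤ M) (hr : rPlus M a < r) (hθ : 0 < Real.sin θ) (u ur uθ : ℝ) :
    -(m ^ 2 * a ^ 2 / (4 * M ^ 2 * rPlus M a ^ 2)) * (kerrW M a r θ * u ^ 2 * Real.sin θ) ≤
      (kerrDelta M a r * ur ^ 2 + uθ ^ 2 +
        (m ^ 2 / Real.sin θ ^ 2 - m ^ 2 * a ^ 2 / kerrDelta M a r) * u ^ 2) * Real.sin θ := by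
  have hV := kerr_potential_add_mul_kerrW_nonneg m hM ha haM hr hθ
  linarith [mul_nonneg (mul_nonneg hV (sq_nonneg u)) hθ.le,
    mul_nonneg (mul_nonneg (kerrDelta_pos hr).le (sq_nonneg ur)) hθ.le,
    mul_nonneg (sq_nonneg uθ) hθ.le]

theorem stmt_4 (M a : ℝ) (m : ℤ) (hM : 0 < M) (ha : 0 ≤ a) (haM : a ≤ M)
    (f : ℝ × ℝ → ℂ) (hf : ContDiff ℝ 2 f) (hfc : HasCompactSupport f)
    (hfsupp : tsupport f ⊆ Set.Ioi (rPlus M a) ×ˢ Set.Ioo 0 Real.pi) :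
    ∫ p in Set.Ioi (rPlus M a) ×ˢ Set.Ioo 0 Real.pi,
        (kerrDelta M a p.1 * ‖pdr f p‖ ^ 2 + ‖pdθ f p‖ ^ 2 +
            ((m : ℝ) ^ 2 / Real.sin p.2 ^ 2 -
              (m : ℝ) ^ 2 * a ^ 2 / kerrDelta M a p.1) * ‖f p‖ ^ 2) *
          Real.sin p.2 ≥
      -((m : ℝ) ^ 2 * a ^ 2 / (4 * M ^ 2 * rPlus M a ^ 2)) *
        ∫ p in Set.Ioi (rPlus M a) ×ˢ Set.Ioo 0 Real.pi,
          kerrW M a p.1 p.2 * ‖f p‖ ^ 2 * Real.sin p.2 := by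
  set Ω := Set.Ioi (rPlus M a) ×ˢ Set.Ioo 0 Real.pi
  have hΩm : MeasurableSet Ω := (isOpen_Ioi.prod isOpen_Ioo).measurableSet
  have hsin : ∀ p ∈ Ω, 0 < Real.sin p.2 := fun p hp => Real.sin_pos_of_pos_of_lt_pi hp.2.1 hp.2.2
  have hΔ0 : ∀ p ∈ Ω, kerrDelta M a p.1 ≠ 0 := fun p hp => (kerrDelta_pos hp.1).ne'
  have hsin0 : ∀ p ∈ Ω, Real.sin p.2 ^ 2 ≠ 0 := fun p hp => (pow_pos (hsin p hp) 2).ne'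
  have hf1 : ContDiff ℝ 1 f := hf.of_le (by norm_num)
  have hfr := hf1.continuous_pdr
  have hfθ := hf1.continuous_pdθ
  have hf0 := hf1.continuous
  have henergy : IntegrableOn (fun p => (kerrDelta M a p.1 * ‖pdr f p‖ ^ 2 + ‖pdθ f p‖ ^ 2 +
      ((m : ℝ) ^ 2 / Real.sin p.2 ^ 2 - (m : ℝ) ^ 2 * a ^ 2 / kerrDelta M a p.1) * ‖f p‖ ^ 2) *
        Real.sin p.2) Ω := by
    refine hfc.isCompact.integrableOn_of_continuousOn hΩm hfsupp ?_ fun p hp => ?_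
    · fun_prop (disch := assumption)
    · simp [image_eq_zero_of_notMem_tsupport hp.2, pdr_eq_zero_of_notMem_tsupport hp.2,
        pdθ_eq_zero_of_notMem_tsupport hp.2]
  have hmass : IntegrableOn (fun p => kerrW M a p.1 p.2 * ‖f p‖ ^ 2 * Real.sin p.2) Ω := by
    refine hfc.isCompact.integrableOn_of_continuousOn hΩm hfsupp ?_ fun p hp => ?_
    · unfold kerrW
      fun_prop (disch := assumption)
    · simp [image_eq_zero_of_notMem_tsupport hp.2]
  rw [ge_iff_le, ← integral_const_mul]
  refine setIntegral_mono_on (hmass.const_mul _) henergy hΩm fun p hp => ?_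
  exact neg_mul_kerrW_le_energy_density m hM ha haM hp.1 (hsin p hp) _ _ _
end

section
/- Let M > 0, 0 ≤ a ≤ M, m ∈ ℤ, and set Δ(r) := r² − 2Mr + a², r₊ := M + √(M² − a²), w(r,θ) := (r²+a²)²/Δ(r) − a² sin²θ. Then for every r > r₊ and every θ ∈ (0,π) one has the pointwise inequality m²/sin²θ − m²a²/Δ(r) + (m²a²/(4M²r₊²)) · w(r,θ) ≥ 0. -/
set_option maxHeartbeats 1000000 in
theorem stmt_5 (M a : ℝ) (m : ℤ) (hM : 0 < M) (ha : 0 ≤ a) (haM : a ≤ M)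
    (r θ : ℝ) (hr : rPlus M a < r) (hθ : θ ∈ Set.Ioo 0 Real.pi) :
    0 ≤ (m : ℝ) ^ 2 / Real.sin θ ^ 2 - (m : ℝ) ^ 2 * a ^ 2 / kerrDelta M a r +
        (m : ℝ) ^ 2 * a ^ 2 / (4 * M ^ 2 * rPlus M a ^ 2) * kerrW M a r θ := by
  obtain ⟨hθ1, hθ2⟩ := hθ
  have hsq : (0:ℝ) ≤ M ^ 2 - a ^ 2 := by nlinarith
  have hsqrt : Real.sqrt (M ^ 2 - a ^ 2) ^ 2 = M ^ 2 - a ^ 2 := Real.sq_sqrt hsq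
  have hsnn : 0 ≤ Real.sqrt (M ^ 2 - a ^ 2) := Real.sqrt_nonneg _
  have hrp : M ≤ rPlus M a := by unfold rPlus; linarith
  have hrp0 : 0 < rPlus M a := lt_of_lt_of_le hM hrp
  have hhor : rPlus M a ^ 2 + a ^ 2 = 2 * M * rPlus M a := by
    unfold rPlus; ring_nf; nlinarith [hsqrt]
  have hra : a ≤ rPlus M a := le_trans haM hrp
  have hD : 0 < kerrDelta M a r := by
    have h0 : kerrDelta M a (rPlus M a) = 0 := by unfold kerrDelta; nlinarith [hhor]
    unfold kerrDelta at *
    nlinarith [hr, hrp, hrp0]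
  have hs : 0 < Real.sin θ := Real.sin_pos_of_pos_of_lt_pi hθ1 hθ2
  have hs1 : Real.sin θ ^ 2 ≤ 1 := by nlinarith [Real.sin_le_one θ, Real.neg_one_le_sin θ]
  have hs2 : 0 < Real.sin θ ^ 2 := by positivity
  have hkey1 : 4 * M ^ 2 * rPlus M a ^ 2 ≤ (r ^ 2 + a ^ 2) ^ 2 := by
    have h1 : rPlus M a ^ 2 + a ^ 2 ≤ r ^ 2 + a ^ 2 := by nlinarith [hr, hrp0]
    nlinarith [hhor, hrp0, hM, sq_nonneg a]
  have hkey2 : a ^ 4 ≤ 4 * M ^ 2 * rPlus M a ^ 2 := by nlinarith [hhor, hra, ha, hrp0, hM]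
  have hP : (0:ℝ) < 4 * M ^ 2 * rPlus M a ^ 2 := by positivity
  have hk : (0:ℝ) ≤ (m : ℝ) ^ 2 := sq_nonneg _
  unfold kerrW
  set s2 := Real.sin θ ^ 2
  set D := kerrDelta M a r
  set rp := rPlus M a
  clear_value s2 D rp
  have hone : (1:ℝ) ≤ (r ^ 2 + a ^ 2) ^ 2 / (4 * M ^ 2 * rp ^ 2) := (one_le_div hP).mpr hkey1
  have h1 : (m : ℝ) ^ 2 * a ^ 2 / D ≤
      (m : ℝ) ^ 2 * a ^ 2 / (4 * M ^ 2 * rp ^ 2) * ((r ^ 2 + a ^ 2) ^ 2 / D) := by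
    calc (m : ℝ) ^ 2 * a ^ 2 / D = (m : ℝ) ^ 2 * a ^ 2 / D * 1 := (mul_one _).symm
      _ ≤ (m : ℝ) ^ 2 * a ^ 2 / D * ((r ^ 2 + a ^ 2) ^ 2 / (4 * M ^ 2 * rp ^ 2)) := by
          apply mul_le_mul_of_nonneg_left hone (by positivity)
      _ = (m : ℝ) ^ 2 * a ^ 2 / (4 * M ^ 2 * rp ^ 2) * ((r ^ 2 + a ^ 2) ^ 2 / D) := by
          ring
  have h2a : (m : ℝ) ^ 2 * a ^ 2 / (4 * M ^ 2 * rp ^ 2) * (a ^ 2 * s2) ≤ (m : ℝ) ^ 2 := by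
    rw [div_mul_eq_mul_div, div_le_iff₀ hP]
    have ha4 : a ^ 2 * (a ^ 2 * s2) ≤ 4 * M ^ 2 * rp ^ 2 := by
      have h5 : a ^ 2 * (a ^ 2 * s2) ≤ a ^ 4 := by nlinarith [hs1, hs2.le, sq_nonneg (a ^ 2)]
      linarith [hkey2]
    calc (m : ℝ) ^ 2 * a ^ 2 * (a ^ 2 * s2) = (m : ℝ) ^ 2 * (a ^ 2 * (a ^ 2 * s2)) := by ring
      _ ≤ (m : ℝ) ^ 2 * (4 * M ^ 2 * rp ^ 2) := mul_le_mul_of_nonneg_left ha4 hk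
  have h2b : (m : ℝ) ^ 2 ≤ (m : ℝ) ^ 2 / s2 := by
    rw [le_div_iff₀ hs2]; nlinarith
  rw [mul_sub]
  linarith [h1, h2a, h2b]
end

section
/- Let M > 0, 0 < a ≤ M, m ∈ ℤ, set Δ(r) := r² − 2Mr + a², r₊ := M + √(M² − a²), r₋ := M − √(M² − a²), and let m₀ ≥ (|m|a/(2Mr₊)) · √(1 + 2M/r₊ + a²/r₊²). Then for every r > r₊ one has |m|(|m|+1) − (m²a²/r₊²) · (r − r₊)/(r − r₋) + m₀² r² − (m²a²/(4M²r₊²)) · (r² + 2Mr + a²) ≥ 0. -/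
/-- Inner horizon radius `r₋ = M − √(M² − a²)`. -/
noncomputable def rMinus (M a : ℝ) : ℝ := M - Real.sqrt (M ^ 2 - a ^ 2)

lemma stmt_11_aux (M a P r : ℝ) (hM : 0 < M) (hp0 : 0 < P) (hr : P < r) :
    r ^ 2 + 2 * M * r + a ^ 2 ≤ (1 + 2 * M / P + a ^ 2 / P ^ 2) * r ^ 2 := by
  have hr0 : 0 < r := lt_trans hp0 hr
  have h2Mr : 2 * M * r ≤ 2 * M / P * r ^ 2 := by
    rw [div_mul_eq_mul_div, le_div_iff₀ hp0]
    nlinarith [mul_pos hM (mul_pos hr0 (sub_pos.mpr hr))]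
  have ha2 : a ^ 2 ≤ a ^ 2 / P ^ 2 * r ^ 2 := by
    rw [div_mul_eq_mul_div, le_div_iff₀ (by positivity)]
    have hP2r : P ^ 2 ≤ r ^ 2 := by nlinarith
    nlinarith [mul_le_mul_of_nonneg_left hP2r (sq_nonneg a)]
  have hexp : (1 + 2 * M / P + a ^ 2 / P ^ 2) * r ^ 2
      = r ^ 2 + 2 * M / P * r ^ 2 + a ^ 2 / P ^ 2 * r ^ 2 := by ring
  linarith

theorem stmt_11 (M a : ℝ) (m : ℤ) (m₀ : ℝ) (hM : 0 < M) (ha : 0 < a) (haM : a ≤ M)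
    (hm₀ : m₀ ≥ |(m : ℝ)| * a / (2 * M * rPlus M a) *
      Real.sqrt (1 + 2 * M / rPlus M a + a ^ 2 / rPlus M a ^ 2))
    (r : ℝ) (hr : rPlus M a < r) :
    |(m : ℝ)| * (|(m : ℝ)| + 1) -
        (m : ℝ) ^ 2 * a ^ 2 / rPlus M a ^ 2 * ((r - rPlus M a) / (r - rMinus M a)) +
        m₀ ^ 2 * r ^ 2 -
        (m : ℝ) ^ 2 * a ^ 2 / (4 * M ^ 2 * rPlus M a ^ 2) * (r ^ 2 + 2 * M * r + a ^ 2) ≥ 0 := by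
  have hs0 : (0:ℝ) ≤ M ^ 2 - a ^ 2 := by nlinarith
  have hs2 : Real.sqrt (M ^ 2 - a ^ 2) ^ 2 = M ^ 2 - a ^ 2 := Real.sq_sqrt hs0
  have hsnn : 0 ≤ Real.sqrt (M ^ 2 - a ^ 2) := Real.sqrt_nonneg _
  have hsM : Real.sqrt (M ^ 2 - a ^ 2) ≤ M := by nlinarith
  set P := rPlus M a with hP
  have hpM : M ≤ P := by simp [hP, rPlus]
  have hp0 : 0 < P := lt_of_lt_of_le hM hpM
  have hrm : rMinus M a ≤ P := by simp [hP, rPlus, rMinus]; linarith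
  have hr1 : 0 < r - P := by linarith
  have hr2 : 0 < r - rMinus M a := by linarith
  have hr0 : 0 < r := lt_trans hp0 hr
  have hratio : (r - P) / (r - rMinus M a) ≤ 1 := by
    rw [div_le_one hr2]; linarith
  have haP : a ≤ P := le_trans haM hpM
  -- bound the ratio term
  have hT1 : (m:ℝ) ^ 2 * a ^ 2 / P ^ 2 * ((r - P) / (r - rMinus M a)) ≤
      |(m:ℝ)| * (|(m:ℝ)| + 1) := by
    have h0 : 0 ≤ (m:ℝ) ^ 2 * a ^ 2 / P ^ 2 := by positivity
    have h1 := mul_le_of_le_one_right h0 hratio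
    have hap2 : a ^ 2 ≤ P ^ 2 := by nlinarith
    have hk : (m:ℝ) ^ 2 * a ^ 2 / P ^ 2 ≤ (m:ℝ) ^ 2 := by
      rw [div_le_iff₀ (by positivity)]
      nlinarith [mul_le_mul_of_nonneg_left hap2 (sq_nonneg (m:ℝ))]
    have hm2 : (m:ℝ) ^ 2 = |(m:ℝ)| ^ 2 := (sq_abs _).symm
    nlinarith [abs_nonneg (m:ℝ)]
  -- bound m₀²
  have hX : (0:ℝ) ≤ 1 + 2 * M / P + a ^ 2 / P ^ 2 := by positivity
  have hc0 : (0:ℝ) ≤ |(m:ℝ)| * a / (2 * M * P) *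
      Real.sqrt (1 + 2 * M / P + a ^ 2 / P ^ 2) := by positivity
  have hm₀0 : 0 ≤ m₀ := le_trans hc0 hm₀
  have hm₀2 : (m:ℝ) ^ 2 * a ^ 2 / (4 * M ^ 2 * P ^ 2) * (1 + 2 * M / P + a ^ 2 / P ^ 2)
      ≤ m₀ ^ 2 := by
    have h1 := pow_le_pow_left₀ hc0 hm₀ 2
    have h2 : (|(m:ℝ)| * a / (2 * M * P) * Real.sqrt (1 + 2 * M / P + a ^ 2 / P ^ 2)) ^ 2
        = (m:ℝ) ^ 2 * a ^ 2 / (4 * M ^ 2 * P ^ 2) * (1 + 2 * M / P + a ^ 2 / P ^ 2) := by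
      rw [mul_pow, Real.sq_sqrt hX, div_pow, mul_pow, mul_pow, mul_pow, sq_abs]
      ring
    linarith [h2 ▸ h1]
  -- the mass term dominates the last term
  have hXr : r ^ 2 + 2 * M * r + a ^ 2 ≤ (1 + 2 * M / P + a ^ 2 / P ^ 2) * r ^ 2 :=
    stmt_11_aux M a P r hM hp0 hr
  set C := (m:ℝ) ^ 2 * a ^ 2 / (4 * M ^ 2 * P ^ 2) with hC
  have hCnn : 0 ≤ C := by positivity
  have h5 : C * (1 + 2 * M / P + a ^ 2 / P ^ 2) * r ^ 2 ≤ m₀ ^ 2 * r ^ 2 :=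
    mul_le_mul_of_nonneg_right hm₀2 (sq_nonneg r)
  have h6 : C * (r ^ 2 + 2 * M * r + a ^ 2) ≤ C * ((1 + 2 * M / P + a ^ 2 / P ^ 2) * r ^ 2) :=
    mul_le_mul_of_nonneg_left hXr hCnn
  have h7 : C * (1 + 2 * M / P + a ^ 2 / P ^ 2) * r ^ 2
      = C * ((1 + 2 * M / P + a ^ 2 / P ^ 2) * r ^ 2) := by ring
  linarith [h5, h6, h7, hT1]
end

section
/- Let M > 0 and 0 ≤ a ≤ M, and set Δ(r) := r² − 2Mr + a², r₊ := M + √(M² − a²), Σ(r,θ) := r² + a² cos²θ, w(r,θ) := (r²+a²)²/Δ(r) − a² sin²θ. Then for every r > r₊ and every θ ∈ (0,π) one has 0 < Σ(r,θ)/w(r,θ) ≤ 1 + a²/r₊². -/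
/-- `Σ(r,θ) = r² + a² cos²θ`. -/
noncomputable def kerrSigma (a r θ : ℝ) : ℝ := r ^ 2 + a ^ 2 * Real.cos θ ^ 2

theorem stmt_16 (M a : ℝ) (hM : 0 < M) (ha : 0 ≤ a) (haM : a ≤ M)
    (r θ : ℝ) (hr : rPlus M a < r) (hθ : θ ∈ Set.Ioo 0 Real.pi) :
    0 < kerrSigma a r θ / kerrW M a r θ ∧
      kerrSigma a r θ / kerrW M a r θ ≤ 1 + a ^ 2 / rPlus M a ^ 2 := by
  have hMa : (0:ℝ) ≤ M ^ 2 - a ^ 2 := by nlinarith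
  have hs := Real.sq_sqrt hMa
  have hs0 := Real.sqrt_nonneg (M ^ 2 - a ^ 2)
  have hrM : M < r := by unfold rPlus at hr; linarith
  have hr0 : 0 < r := lt_trans hM hrM
  have hΔpos : 0 < kerrDelta M a r := by
    unfold rPlus at hr; unfold kerrDelta; nlinarith
  have hΔle : kerrDelta M a r ≤ r ^ 2 := by unfold kerrDelta; nlinarith
  have hpyth := Real.sin_sq_add_cos_sq θ
  have hSpos : 0 < kerrSigma a r θ := by
    unfold kerrSigma; nlinarith [sq_nonneg (a * Real.cos θ)]
  have key : r ^ 2 + a ^ 2 ≤ (r ^ 2 + a ^ 2) ^ 2 / kerrDelta M a r := by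
    rw [le_div_iff₀ hΔpos]; nlinarith [sq_nonneg a]
  have hSw : kerrSigma a r θ ≤ kerrW M a r θ := by
    unfold kerrSigma kerrW; nlinarith [sq_nonneg a]
  have hwpos : 0 < kerrW M a r θ := lt_of_lt_of_le hSpos hSw
  have hrp : 0 < rPlus M a := by unfold rPlus; linarith
  refine ⟨div_pos hSpos hwpos, ?_⟩
  have h1 : kerrSigma a r θ / kerrW M a r θ ≤ 1 := (div_le_one hwpos).mpr hSw
  have h2 : 0 ≤ a ^ 2 / rPlus M a ^ 2 := div_nonneg (sq_nonneg a) (sq_nonneg _)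
  linarith
end
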